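/- arXiv:2004.03538 — 6 statements merged into one kernel-verified Lean document; each statement's English description precedes it below -/
import Mathlib

section
/- (Forney) Let C ⊆ F_q^n have minimum distance d, let r ∈ F_q^n, and let α ∈ [0,1]^n be a reliability weight vector. Then there is at most one codeword c ∈ C satisfying Σ_{i ∈ I_C} (1 − α_i) + Σ_{i ∈ I_E} (1 + α_i) < d, where I_E = supp(r − c) and I_C = [n] \ I_E. -/
/-- Forney: there is at most one codeword `c ∈ C` satisfying the generalized
minimum distance condition
`Σ_{i ∈ I_C} (1 − α_i) + Σ_{i ∈ I_E} (1 + α_i) < d`,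
where `I_E = supp(r − c)` and `I_C = [n] \ I_E`. -/
theorem at_most_one_codeword_gmd
    {n : ℕ} {Fq : Type*} [Field Fq] [Fintype Fq] [DecidableEq Fq]
    (C : Set (Fin n → Fq)) (d : ℕ)
    (hC : ∀ x ∈ C, ∀ y ∈ C, x ≠ y → d ≤ hammingDist x y)
    (r : Fin n → Fq) (α : Fin n → ℝ)
    (hα : ∀ i, 0 ≤ α i ∧ α i ≤ 1) :
    ∀ c₁ ∈ C, ∀ c₂ ∈ C,
      ((∑ i ∈ Finset.univ.filter fun i => r i = c₁ i, (1 - α i)) +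
       (∑ i ∈ Finset.univ.filter fun i => r i ≠ c₁ i, (1 + α i)) < (d : ℝ)) →
      ((∑ i ∈ Finset.univ.filter fun i => r i = c₂ i, (1 - α i)) +
       (∑ i ∈ Finset.univ.filter fun i => r i ≠ c₂ i, (1 + α i)) < (d : ℝ)) →
      c₁ = c₂ := by
  intro c₁ h₁ c₂ h₂ H₁ H₂
  by_contra hne
  have hd : (d : ℝ) ≤ hammingDist c₁ c₂ := by exact_mod_cast hC c₁ h₁ c₂ h₂ hne
  have e₁ : (∑ i ∈ Finset.univ.filter fun i => r i = c₁ i, (1 - α i)) +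
      (∑ i ∈ Finset.univ.filter fun i => r i ≠ c₁ i, (1 + α i)) =
      ∑ i : Fin n, (if r i = c₁ i then 1 - α i else 1 + α i) :=
    (Finset.sum_ite _ _).symm
  have e₂ : (∑ i ∈ Finset.univ.filter fun i => r i = c₂ i, (1 - α i)) +
      (∑ i ∈ Finset.univ.filter fun i => r i ≠ c₂ i, (1 + α i)) =
      ∑ i : Fin n, (if r i = c₂ i then 1 - α i else 1 + α i) :=
    (Finset.sum_ite _ _).symm
  have key : (2 : ℝ) * hammingDist c₁ c₂ ≤
      (∑ i : Fin n, (if r i = c₁ i then 1 - α i else 1 + α i)) +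
      (∑ i : Fin n, (if r i = c₂ i then 1 - α i else 1 + α i)) := by
    rw [← Finset.sum_add_distrib]
    have hham : (2 : ℝ) * hammingDist c₁ c₂ =
        ∑ i : Fin n, (if c₁ i = c₂ i then (0 : ℝ) else 2) := by
      rw [hammingDist, Finset.sum_ite, Finset.sum_const, Finset.sum_const]
      simp [Finset.filter_not, mul_comm]
    rw [hham]
    apply Finset.sum_le_sum
    intro i _
    obtain ⟨h0, h1⟩ := hα i
    by_cases e : c₁ i = c₂ i
    · rw [if_pos e]
      split_ifs <;> linarith
    · rw [if_neg e]
      split_ifs <;>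
        first
          | linarith
          | exact absurd ((‹r i = c₁ i›).symm.trans ‹r i = c₂ i›) e
  rw [e₁] at H₁
  rw [e₂] at H₂
  linarith
end

section
/- (Forney) Suppose symbols are classified into J reliability classes with weights a_1 ≤ … ≤ a_J, and let E_j = {i ∈ [n] : α_i ≤ a_j} for 1 ≤ j ≤ J with E_0 = ∅. If a codeword c satisfies Σ_{i ∈ I_C} (1 − α_i) + Σ_{i ∈ I_E} (1 + α_i) < d (where I_E = supp(r − c), I_C = [n] \ I_E), then there exists j with 0 ≤ j < J such that 2·wt_{E_j}(r − c) + |E_j| < d. -/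
/-- Hamming weight of `v` punctured at the coordinates in `E`. -/
def wtE {n : ℕ} {Fq : Type*} [Zero Fq] [DecidableEq Fq]
    (E : Finset (Fin n)) (v : Fin n → Fq) : ℕ :=
  ((Finset.univ.filter fun i => v i ≠ 0) \ E).card

/-- The erasure set `E_j = {i : α i ≤ a j}` for `1 ≤ j ≤ J`, with `E_0 = ∅`. -/
noncomputable def erasureSet {n : ℕ} (α : Fin n → ℝ) (a : ℕ → ℝ) (j : ℕ) : Finset (Fin n) :=
  if j = 0 then ∅ else Finset.univ.filter fun i => α i ≤ a j

/-- Forney: if a codeword `c` satisfies the GMD condition, then some erasure set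
`E_j` with `0 ≤ j < J` satisfies `2 · wt_{E_j}(r − c) + |E_j| < d`. -/
theorem gmd_condition_implies_erasure_decoding
    {n J d : ℕ} {Fq : Type*} [Field Fq] [Fintype Fq] [DecidableEq Fq]
    (C : Set (Fin n → Fq))
    (hC : ∀ x ∈ C, ∀ y ∈ C, x ≠ y → d ≤ hammingDist x y)
    (hdn : d ≤ n)
    (r : Fin n → Fq) (α : Fin n → ℝ)
    (hα : ∀ i, 0 ≤ α i ∧ α i ≤ 1)
    (a : ℕ → ℝ) (ha : Monotone a)
    (ha01 : ∀ j, 1 ≤ j → j ≤ J → 0 ≤ a j ∧ a j ≤ 1)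
    (hclass : ∀ i, ∃ j, 1 ≤ j ∧ j ≤ J ∧ α i = a j)
    (c : Fin n → Fq) (hc : c ∈ C)
    (hforney :
      (∑ i ∈ Finset.univ.filter fun i => r i = c i, (1 - α i)) +
      (∑ i ∈ Finset.univ.filter fun i => r i ≠ c i, (1 + α i)) < (d : ℝ)) :
    ∃ j < J, 2 * wtE (erasureSet α a j) (r - c) + (erasureSet α a j).card < d := by
  classical
  by_contra hcon
  push_neg at hcon
  -- hcon : ∀ j < J, d ≤ 2 * wtE (erasureSet α a j) (r - c) + (erasureSet α a j).card
  rcases Nat.eq_zero_or_pos n with hn | hn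
  · subst hn
    have hd0 : d = 0 := Nat.le_zero.mp hdn
    simp [Finset.univ_eq_empty, hd0] at hforney
  obtain ⟨k0, hk01, hk0J, _⟩ := hclass ⟨0, hn⟩
  have hJ : 1 ≤ J := hk01.trans hk0J
  set b : ℕ → ℝ := fun j => if j = 0 then 0 else if J < j then 1 else a j with hbdef
  have hb0 : b 0 = 0 := by simp [hbdef]
  have hbJ1 : b (J + 1) = 1 := by simp [hbdef]
  have hbk : ∀ k, 1 ≤ k → k ≤ J → b k = a k := by
    intro k h1 h2
    simp only [hbdef]
    rw [if_neg (by omega), if_neg (by omega)]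
  have hbmono : ∀ j, j ≤ J → b j ≤ b (j + 1) := by
    intro j hj
    rcases Nat.eq_zero_or_pos j with h0 | h1
    · subst h0
      rw [hb0, hbk 1 le_rfl hJ]
      exact (ha01 1 le_rfl hJ).1
    · rcases eq_or_lt_of_le hj with hEq | hlt
      · subst hEq
        rw [hbk j h1 le_rfl, hbJ1]
        exact (ha01 j h1 le_rfl).2
      · rw [hbk j h1 hj, hbk (j + 1) (by omega) (by omega)]
        exact ha (Nat.le_succ j)
  have hmemE : ∀ j, 1 ≤ j → ∀ i : Fin n, (i ∈ erasureSet α a j ↔ α i ≤ a j) := by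
    intro j hj i
    simp [erasureSet, Nat.one_le_iff_ne_zero.mp hj]
  -- per-term telescoping identity
  have hterm : ∀ i : Fin n, ∀ j, j ≤ J →
      (b (j + 1) - b j) * (if i ∈ erasureSet α a j then (1 : ℝ) else 0)
        = max (b (j + 1)) (α i) - max (b j) (α i) := by
    intro i j hj
    obtain ⟨k, hk1, hkJ, hik⟩ := hclass i
    rcases Nat.eq_zero_or_pos j with h0 | h1
    · subst h0
      have h1k : a 1 ≤ α i := by rw [hik]; exact ha hk1
      have h0i : (0 : ℝ) ≤ α i := (hα i).1
      have hnm : i ∉ erasureSet α a 0 := by simp [erasureSet]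
      rw [if_neg hnm, mul_zero, hb0, show (0 : ℕ) + 1 = 1 from rfl,
        hbk 1 le_rfl hJ, max_eq_right h1k, max_eq_right h0i, sub_self]
    · have hbj : b j = a j := hbk j h1 hj
      by_cases hle : α i ≤ a j
      · rw [if_pos ((hmemE j h1 i).mpr hle), mul_one]
        have h2 : α i ≤ b (j + 1) := le_trans (hbj ▸ hle) (hbmono j hj)
        rw [max_eq_left h2, max_eq_left (hbj ▸ hle)]
      · rw [if_neg (fun h => hle ((hmemE j h1 i).mp h)), mul_zero]
        have hij : a j < α i := not_le.mp hle
        have h2 : b (j + 1) ≤ α i := by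
          rcases eq_or_lt_of_le hj with hEq | hlt
          · exfalso
            apply hle
            rw [hik, hEq]
            exact ha hkJ
          · rw [hbk (j + 1) (by omega) hlt]
            have hkj : j < k := by
              by_contra hkj
              exact hle (by rw [hik]; exact ha (not_lt.mp hkj))
            rw [hik]
            exact ha (by omega : j + 1 ≤ k)
        rw [max_eq_right h2, max_eq_right (le_of_lt (hbj ▸ hij))]
        ring
  -- the erasure probability of each coordinate is exactly 1 - α i
  have hP : ∀ i : Fin n,
      (∑ j ∈ Finset.range (J + 1),
        (b (j + 1) - b j) * (if i ∈ erasureSet α a j then (1 : ℝ) else 0)) = 1 - α i := by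
    intro i
    rw [Finset.sum_congr rfl
      (fun j hj => hterm i j (Nat.lt_succ_iff.mp (Finset.mem_range.mp hj)))]
    rw [Finset.sum_range_sub (fun j => max (b j) (α i)), hbJ1, hb0,
      max_eq_left (hα i).2, max_eq_right (hα i).1]
  have hlam1 : ∑ j ∈ Finset.range (J + 1), (b (j + 1) - b j) = 1 := by
    rw [Finset.sum_range_sub b, hbJ1, hb0, sub_zero]
  -- per-coordinate weighted sum
  have hg : ∀ i : Fin n,
      (∑ j ∈ Finset.range (J + 1), (b (j + 1) - b j) *
        (if i ∈ erasureSet α a j then (1 : ℝ) else if r i ≠ c i then 2 else 0))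
        = if r i = c i then 1 - α i else 1 + α i := by
    intro i
    by_cases hri : r i = c i
    · rw [if_pos hri, ← hP i]
      apply Finset.sum_congr rfl
      intro j _
      congr 1
      by_cases hm : i ∈ erasureSet α a j <;> simp [hm, hri]
    · rw [if_neg hri]
      have hrw : ∀ j, (if i ∈ erasureSet α a j then (1 : ℝ) else if r i ≠ c i then 2 else 0)
          = 2 - (if i ∈ erasureSet α a j then (1 : ℝ) else 0) := by
        intro j
        by_cases hm : i ∈ erasureSet α a j <;> norm_num [hm, hri]
      calc (∑ j ∈ Finset.range (J + 1), (b (j + 1) - b j) *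
            (if i ∈ erasureSet α a j then (1 : ℝ) else if r i ≠ c i then 2 else 0))
          = ∑ j ∈ Finset.range (J + 1), ((b (j + 1) - b j) * 2
              - (b (j + 1) - b j) * (if i ∈ erasureSet α a j then (1 : ℝ) else 0)) := by
            apply Finset.sum_congr rfl
            intro j _
            rw [hrw j]
            ring
        _ = (∑ j ∈ Finset.range (J + 1), (b (j + 1) - b j)) * 2 - (1 - α i) := by
            rw [Finset.sum_sub_distrib, ← Finset.sum_mul, hP i]
        _ = 1 + α i := by rw [hlam1]; ring
  -- the count 2·wtE + |E| as a sum over coordinates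
  have hQ : ∀ j : ℕ,
      ((2 * wtE (erasureSet α a j) (r - c) + (erasureSet α a j).card : ℕ) : ℝ)
        = ∑ i : Fin n,
            (if i ∈ erasureSet α a j then (1 : ℝ) else if r i ≠ c i then 2 else 0) := by
    intro j
    rw [show (∑ i : Fin n,
          (if i ∈ erasureSet α a j then (1 : ℝ) else if r i ≠ c i then 2 else 0))
        = ∑ i ∈ Finset.univ \ erasureSet α a j,
            (if i ∈ erasureSet α a j then (1 : ℝ) else if r i ≠ c i then 2 else 0)
          + ∑ i ∈ erasureSet α a j,
            (if i ∈ erasureSet α a j then (1 : ℝ) else if r i ≠ c i then 2 else 0)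
        from (Finset.sum_sdiff (Finset.subset_univ _)).symm]
    have h1 : (∑ i ∈ erasureSet α a j,
        (if i ∈ erasureSet α a j then (1 : ℝ) else if r i ≠ c i then 2 else 0))
        = ((erasureSet α a j).card : ℝ) := by
      rw [Finset.sum_congr rfl (fun i hi => if_pos hi), Finset.sum_const, nsmul_eq_mul, mul_one]
    have hfil : (Finset.univ \ erasureSet α a j).filter (fun i => r i ≠ c i)
        = (Finset.univ.filter fun i => (r - c) i ≠ 0) \ erasureSet α a j := by
      ext i
      simp only [Finset.mem_filter, Finset.mem_sdiff, Finset.mem_univ, true_and,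
        Pi.sub_apply, sub_ne_zero]
      tauto
    have h2 : (∑ i ∈ Finset.univ \ erasureSet α a j,
        (if i ∈ erasureSet α a j then (1 : ℝ) else if r i ≠ c i then 2 else 0))
        = 2 * (wtE (erasureSet α a j) (r - c) : ℝ) := by
      rw [Finset.sum_congr rfl (fun i hi => if_neg (Finset.mem_sdiff.mp hi).2),
        ← Finset.sum_filter, hfil, Finset.sum_const, nsmul_eq_mul, wtE]
      ring
    rw [h1, h2]
    push_cast
    ring
  -- E_J is everything
  have hEJ : erasureSet α a J = Finset.univ := by
    ext i
    simp only [Finset.mem_univ, iff_true]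
    rw [hmemE J hJ i]
    obtain ⟨k, hk1, hkJ, hik⟩ := hclass i
    rw [hik]
    exact ha hkJ
  have hQJ : d ≤ 2 * wtE (erasureSet α a J) (r - c) + (erasureSet α a J).card :=
    le_trans (le_trans hdn (by rw [hEJ, Finset.card_univ, Fintype.card_fin]))
      (Nat.le_add_left _ _)
  have hall : ∀ j ∈ Finset.range (J + 1), (d : ℝ) ≤
      ((2 * wtE (erasureSet α a j) (r - c) + (erasureSet α a j).card : ℕ) : ℝ) := by
    intro j hj
    have hj' : j ≤ J := Nat.lt_succ_iff.mp (Finset.mem_range.mp hj)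
    rcases lt_or_eq_of_le hj' with h | h
    · exact_mod_cast hcon j h
    · subst h
      exact_mod_cast hQJ
  have hlamnn : ∀ j ∈ Finset.range (J + 1), (0 : ℝ) ≤ b (j + 1) - b j := fun j hj =>
    sub_nonneg.mpr (hbmono j (Nat.lt_succ_iff.mp (Finset.mem_range.mp hj)))
  have key : (d : ℝ) ≤ (∑ i ∈ Finset.univ.filter fun i => r i = c i, (1 - α i)) +
      (∑ i ∈ Finset.univ.filter fun i => r i ≠ c i, (1 + α i)) := by
    calc (d : ℝ) = ∑ j ∈ Finset.range (J + 1), (b (j + 1) - b j) * d := by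
          rw [← Finset.sum_mul, hlam1, one_mul]
      _ ≤ ∑ j ∈ Finset.range (J + 1), (b (j + 1) - b j) *
            ((2 * wtE (erasureSet α a j) (r - c) + (erasureSet α a j).card : ℕ) : ℝ) := by
          apply Finset.sum_le_sum
          intro j hj
          exact mul_le_mul_of_nonneg_left (hall j hj) (hlamnn j hj)
      _ = ∑ j ∈ Finset.range (J + 1), ∑ i : Fin n, (b (j + 1) - b j) *
            (if i ∈ erasureSet α a j then (1 : ℝ) else if r i ≠ c i then 2 else 0) := by
          apply Finset.sum_congr rfl
          intro j _
          rw [hQ j, Finset.mul_sum]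
      _ = ∑ i : Fin n, ∑ j ∈ Finset.range (J + 1), (b (j + 1) - b j) *
            (if i ∈ erasureSet α a j then (1 : ℝ) else if r i ≠ c i then 2 else 0) :=
          Finset.sum_comm
      _ = ∑ i : Fin n, (if r i = c i then 1 - α i else 1 + α i) :=
          Finset.sum_congr rfl (fun i _ => hg i)
      _ = _ := Finset.sum_ite _ _
  linarith
end

section
/- Let C ⊆ F_q^n have minimum distance d and let F_1 ⊂ F_2 ⊆ [n] with |F_2| = |F_1| + 1 and d − |F_1| even. If there exists a codeword x_1 with 2·wt_{F_1}(r − x_1) + |F_1| < d, and a codeword x_2 with 2·wt_{F_2}(r − x_2) + |F_2| < d, then x_1 = x_2. -/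
lemma wtE_key {n : ℕ} {Fq : Type*} [Field Fq] [DecidableEq Fq]
    (r x y : Fin n → Fq) (E : Finset (Fin n)) :
    hammingDist x y ≤ wtE E (r - x) + wtE E (r - y) + E.card := by
  classical
  have hsub : (Finset.univ.filter fun i => x i ≠ y i) ⊆
      ((Finset.univ.filter fun i => (r - x) i ≠ 0) \ E) ∪
      (((Finset.univ.filter fun i => (r - y) i ≠ 0) \ E) ∪ E) := by
    intro i hi
    simp only [Finset.mem_filter, Finset.mem_univ, true_and] at hi
    by_cases hE : i ∈ E
    · simp [hE]
    · simp only [Finset.mem_union, Finset.mem_sdiff, Finset.mem_filter,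
        Finset.mem_univ, true_and, Pi.sub_apply]
      by_cases h1 : r i - x i = 0
      · right; left
        refine ⟨fun h2 => hi ?_, hE⟩
        have e1 := sub_eq_zero.mp h1
        have e2 := sub_eq_zero.mp h2
        rw [← e1, ← e2]
      · left; exact ⟨h1, hE⟩
  have h1 := Finset.card_le_card hsub
  have h2 := Finset.card_union_le
    ((Finset.univ.filter fun i => (r - x) i ≠ 0) \ E)
    ((((Finset.univ.filter fun i => (r - y) i ≠ 0) \ E)) ∪ E)
  have h3 := Finset.card_union_le
    ((Finset.univ.filter fun i => (r - y) i ≠ 0) \ E) E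
  have hd : hammingDist x y = (Finset.univ.filter fun i => x i ≠ y i).card := by
    simp [hammingDist]
  unfold wtE
  omega

/-- If `F₁ ⊂ F₂`, `|F₂| = |F₁| + 1` and `d − |F₁|` is even, then successful
error-and-erasure decoding with `F₁` and with `F₂` yields the same codeword. -/
theorem erasure_decoding_even_step_agrees
    {n : ℕ} {Fq : Type*} [Field Fq] [Fintype Fq] [DecidableEq Fq]
    (C : Set (Fin n → Fq)) (d : ℕ)
    (hC : ∀ x ∈ C, ∀ y ∈ C, x ≠ y → d ≤ hammingDist x y)
    (r : Fin n → Fq) (F₁ F₂ : Finset (Fin n))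
    (hsub : F₁ ⊂ F₂) (hcard : F₂.card = F₁.card + 1)
    (heven : Even (d - F₁.card))
    (x₁ : Fin n → Fq) (hx₁ : x₁ ∈ C)
    (h₁ : 2 * wtE F₁ (r - x₁) + F₁.card < d)
    (x₂ : Fin n → Fq) (hx₂ : x₂ ∈ C)
    (h₂ : 2 * wtE F₂ (r - x₂) + F₂.card < d) :
    x₁ = x₂ := by
  by_contra hne
  have hd := hC x₁ hx₁ x₂ hx₂ hne
  have hkey := wtE_key r x₁ x₂ F₂
  have hmono : wtE F₂ (r - x₁) ≤ wtE F₁ (r - x₁) :=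
    Finset.card_le_card (Finset.sdiff_subset_sdiff (Finset.Subset.refl _) hsub.subset)
  obtain ⟨k, hk⟩ := heven
  omega
end

section
/- (Blackmore–Norton) Let B ∈ F_q^{k×N} be non-singular by columns and C = [A_1 … A_k]·B the matrix-product code with linear constituent codes A_i of length M, dimension k_i, and minimum distance d_{a,i}. Then |C| = |A_1|···|A_k| and the minimum distance of C is at least d* = min_{i ∈ [k]} d_{a,i} · (N − i + 1). -/
/-- `B` is non-singular by columns: every `t × t` submatrix built from the first
`t` rows and any `t` columns of `B` is non-singular. -/
def NSC {k N : ℕ} {Fq : Type*} [Field Fq] (B : Matrix (Fin k) (Fin N) Fq) : Prop :=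
  ∀ (t : ℕ) (ht : t ≤ k) (f : Fin t → Fin N), StrictMono f →
    (Matrix.of fun i j : Fin t => B (Fin.castLE ht i) (f j)).det ≠ 0

/-- The matrix-product code `[A_1 … A_k]·B`. -/
def matrixProductCode {Fq : Type*} [Field Fq] {M N k : ℕ}
    (A : Fin k → Submodule Fq (Fin M → Fq)) (B : Matrix (Fin k) (Fin N) Fq) :
    Set (Fin M → Fin N → Fq) :=
  {w | ∃ a : (i : Fin k) → (Fin M → Fq), (∀ i, a i ∈ A i) ∧
        w = fun m n => ∑ i, a i m * B i n}

lemma row_weight {Fq : Type*} [Field Fq] [DecidableEq Fq] {k N : ℕ}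
    (B : Matrix (Fin k) (Fin N) Fq) (hB : NSC B)
    (c : Fin k → Fq) (i : Fin k) (hci : c i ≠ 0) (hz : ∀ j, i < j → c j = 0) :
    N - (i : ℕ) ≤ (Finset.univ.filter fun n : Fin N => (∑ j, c j * B j n) ≠ 0).card := by
  classical
  set Z : Finset (Fin N) := Finset.univ.filter fun n : Fin N => (∑ j, c j * B j n) = 0 with hZ
  have hsplit : Z.card + (Finset.univ.filter fun n : Fin N => (∑ j, c j * B j n) ≠ 0).card
      = N := by
    rw [hZ, Finset.card_filter_add_card_filter_not]
    simp
  have hZcard : Z.card ≤ (i : ℕ) := by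
    by_contra hlt
    push_neg at hlt
    obtain ⟨T, hTZ, hTcard⟩ := Finset.exists_subset_card_eq hlt
    have htk : (i : ℕ) + 1 ≤ k := i.isLt
    set f : Fin ((i : ℕ) + 1) ↪o Fin N := T.orderEmbOfFin hTcard with hf
    have hdet := hB ((i : ℕ) + 1) htk f f.strictMono
    set Msub : Matrix (Fin ((i:ℕ)+1)) (Fin ((i:ℕ)+1)) Fq :=
      Matrix.of fun a b : Fin ((i:ℕ)+1) => B (Fin.castLE htk a) (f b) with hM
    set c' : Fin ((i:ℕ)+1) → Fq := fun s => c (Fin.castLE htk s) with hc'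
    have hsum : ∀ n : Fin N, ∑ j, c j * B j n = ∑ s : Fin ((i:ℕ)+1), c' s * B (Fin.castLE htk s) n := by
      intro n
      have h1 : ∑ s : Fin ((i:ℕ)+1), c' s * B (Fin.castLE htk s) n
          = ∑ x ∈ Finset.univ.map (Fin.castLEEmb htk), c x * B x n := by
        rw [Finset.sum_map]
        rfl
      rw [h1]
      refine (Finset.sum_subset (Finset.subset_univ _) ?_).symm
      intro x _ hx
      have hix : i < x := by
        by_contra hle
        push_neg at hle
        refine hx (Finset.mem_map.2 ⟨⟨(x : ℕ), ?_⟩, Finset.mem_univ _, ?_⟩)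
        · have : (x : ℕ) ≤ (i : ℕ) := hle
          omega
        · rfl
      simp [hz x hix]
    have hvm : Matrix.vecMul c' Msub = 0 := by
      funext b
      have hfb : f b ∈ Z := hTZ (T.orderEmbOfFin_mem hTcard b)
      rw [hZ, Finset.mem_filter] at hfb
      simpa [Matrix.vecMul, dotProduct, hM, ← hsum (f b)] using hfb.2
    have hinv : Msub * Msub⁻¹ = 1 := Matrix.mul_nonsing_inv Msub (isUnit_iff_ne_zero.2 hdet)
    have : c' = 0 := by
      have h1 : Matrix.vecMul c' (Msub * Msub⁻¹) = 0 := by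
        rw [← Matrix.vecMul_vecMul, hvm, Matrix.zero_vecMul]
      rwa [hinv, Matrix.vecMul_one] at h1
    have : c' ⟨(i : ℕ), Nat.lt_succ_self _⟩ = 0 := by rw [this]; rfl
    exact hci (by simpa [hc'] using this)
  omega

lemma main_bound {Fq : Type*} [Field Fq] [DecidableEq Fq] {M N k : ℕ}
    (B : Matrix (Fin k) (Fin N) Fq) (hB : NSC B)
    (b : Fin k → Fin M → Fq) (hb : ∃ i, b i ≠ 0) :
    ∃ i : Fin k, b i ≠ 0 ∧ hammingNorm (b i) * (N - (i : ℕ)) ≤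
      (Finset.univ.filter fun q : Fin M × Fin N => (∑ j, b j q.1 * B j q.2) ≠ 0).card := by
  classical
  set S : Finset (Fin k) := Finset.univ.filter fun i => b i ≠ 0 with hSdef
  have hS : S.Nonempty := by
    obtain ⟨i, hi⟩ := hb
    exact ⟨i, Finset.mem_filter.2 ⟨Finset.mem_univ _, hi⟩⟩
  set i : Fin k := S.max' hS with hidef
  have hbi : b i ≠ 0 := (Finset.mem_filter.1 (S.max'_mem hS)).2
  have hz : ∀ j, i < j → b j = 0 := by
    intro j hj
    by_contra hbj
    exact absurd (S.le_max' j (Finset.mem_filter.2 ⟨Finset.mem_univ _, hbj⟩)) (not_le.2 hj)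
  refine ⟨i, hbi, ?_⟩
  have hcard : (Finset.univ.filter fun q : Fin M × Fin N => (∑ j, b j q.1 * B j q.2) ≠ 0).card
      = ∑ m : Fin M, (Finset.univ.filter fun n : Fin N => (∑ j, b j m * B j n) ≠ 0).card := by
    rw [Finset.card_filter, Fintype.sum_prod_type]
    simp [Finset.card_filter]
  rw [hcard]
  calc hammingNorm (b i) * (N - (i : ℕ))
      = ∑ _m ∈ Finset.univ.filter (fun m => b i m ≠ 0), (N - (i : ℕ)) := by
        rw [Finset.sum_const, smul_eq_mul]; rfl
    _ ≤ ∑ m ∈ Finset.univ.filter (fun m => b i m ≠ 0),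
          (Finset.univ.filter fun n : Fin N => (∑ j, b j m * B j n) ≠ 0).card := by
        refine Finset.sum_le_sum fun m hm => ?_
        exact row_weight B hB (fun j => b j m) i ((Finset.mem_filter.1 hm).2)
          (fun j hj => by simp [hz j hj])
    _ ≤ ∑ m : Fin M, (Finset.univ.filter fun n : Fin N => (∑ j, b j m * B j n) ≠ 0).card :=
        Finset.sum_le_sum_of_subset (Finset.filter_subset _ _)

/-- Blackmore–Norton: if `B ∈ F_q^{k×N}` is NSC then the matrix-product code
`C = [A_1 … A_k]·B` has `|C| = |A_1|⋯|A_k|` and minimum distance at least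
`d* = min_i d_{a,i}·(N − (i−1))` (with `i` one-based; here `i : Fin k` is
zero-based, so the factor is `N − i`). -/
theorem matrix_product_code_card_and_min_dist
    {Fq : Type*} [Field Fq] [Fintype Fq] [DecidableEq Fq]
    {M N k : ℕ} (hkN : k ≤ N)
    (B : Matrix (Fin k) (Fin N) Fq) (hB : NSC B)
    (A : Fin k → Submodule Fq (Fin M → Fq)) (da : Fin k → ℕ)
    (hA : ∀ i, ∀ v ∈ A i, v ≠ 0 → da i ≤ hammingNorm v) :
    (Set.ncard (matrixProductCode A B) = ∏ i, Nat.card (A i)) ∧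
    (∀ w₁ ∈ matrixProductCode A B, ∀ w₂ ∈ matrixProductCode A B, w₁ ≠ w₂ →
      ∃ i : Fin k, da i * (N - (i : ℕ)) ≤
        (Finset.univ.filter fun q : Fin M × Fin N => w₁ q.1 q.2 ≠ w₂ q.1 q.2).card) := by
  classical
  constructor
  · -- cardinality
    set Φ : ((i : Fin k) → (A i : Submodule Fq (Fin M → Fq))) → (Fin M → Fin N → Fq) :=
      fun a => fun m n => ∑ i, (a i : Fin M → Fq) m * B i n with hΦ
    have hrange : matrixProductCode A B = Set.range Φ := by
      ext w
      constructor
      · rintro ⟨a, ha, rfl⟩; exact ⟨fun i => ⟨a i, ha i⟩, rfl⟩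
      · rintro ⟨a, rfl⟩; exact ⟨fun i => (a i : Fin M → Fq), fun i => (a i).2, rfl⟩
    have hinj : Function.Injective Φ := by
      intro a a' h
      by_contra hne
      set b : Fin k → Fin M → Fq := fun i => (a i : Fin M → Fq) - (a' i : Fin M → Fq) with hbdef
      have hb : ∃ i, b i ≠ 0 := by
        by_contra hall
        push_neg at hall
        apply hne
        funext i
        apply Subtype.ext
        have := hall i
        rwa [hbdef, sub_eq_zero] at this
      obtain ⟨i, hbi, hle⟩ := main_bound B hB b hb
      have hzero : (Finset.univ.filter fun q : Fin M × Fin N =>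
          (∑ j, b j q.1 * B j q.2) ≠ 0) = ∅ := by
        refine Finset.filter_false_of_mem fun q _ => ?_
        simp only [not_not]
        have : ∑ j, b j q.1 * B j q.2 = Φ a q.1 q.2 - Φ a' q.1 q.2 := by
          simp [hbdef, hΦ, sub_mul, Finset.sum_sub_distrib]
        rw [this, h, sub_self]
      rw [hzero, Finset.card_empty, Nat.le_zero, Nat.mul_eq_zero] at hle
      have hiN : (i : ℕ) < N := lt_of_lt_of_le i.isLt hkN
      rcases hle with h1 | h2
      · exact hbi (hammingNorm_eq_zero.1 h1)
      · omega
    rw [hrange, ← Nat.card_coe_set_eq, Nat.card_range_of_injective hinj, Nat.card_pi]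
  · -- minimum distance
    rintro w₁ ⟨a₁, ha₁, rfl⟩ w₂ ⟨a₂, ha₂, rfl⟩ hne
    set b : Fin k → Fin M → Fq := fun i => a₁ i - a₂ i with hbdef
    have hsum : ∀ m n, ∑ j, b j m * B j n = (∑ j, a₁ j m * B j n) - (∑ j, a₂ j m * B j n) := by
      intro m n
      simp [hbdef, sub_mul, Finset.sum_sub_distrib]
    have hb : ∃ i, b i ≠ 0 := by
      by_contra hall
      push_neg at hall
      apply hne
      funext m n
      have h0 : ∑ j, b j m * B j n = 0 := by
        refine Finset.sum_eq_zero fun j _ => ?_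
        rw [hall j]
        simp
      have := hsum m n
      rw [h0] at this
      exact sub_eq_zero.1 this.symm
    obtain ⟨i, hbi, hle⟩ := main_bound B hB b hb
    refine ⟨i, ?_⟩
    have h1 : da i ≤ hammingNorm (b i) :=
      hA i (b i) (Submodule.sub_mem _ (ha₁ i) (ha₂ i)) hbi
    refine (Nat.mul_le_mul_right _ h1).trans (hle.trans (le_of_eq ?_))
    congr 1
    refine Finset.filter_congr fun q _ => ?_
    rw [hsum q.1 q.2, sub_ne_zero]
end

section
/- (Blackmore–Norton) If B ∈ F_q^{k×N} is non-singular by columns and additionally triangular (a column permutation of an upper-triangular matrix), then the minimum distance of C = [A_1 … A_k]·B equals d* = min_{i ∈ [k]} d_{a,i} · (N − i + 1). -/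
set_option maxRecDepth 8000

/-- `B` is triangular: a column permutation of an upper-triangular matrix. -/
def Triangular {k N : ℕ} {Fq : Type*} [Field Fq] (B : Matrix (Fin k) (Fin N) Fq) : Prop :=
  ∃ π : Equiv.Perm (Fin N), ∀ (i : Fin k) (j : Fin N), ((π j : ℕ) < (i : ℕ)) → B i j = 0

lemma card_filter_prod {M N : ℕ} (p : Fin M → Fin N → Prop) [∀ m n, Decidable (p m n)] :
    (Finset.univ.filter fun q : Fin M × Fin N => p q.1 q.2).card
      = ∑ m, (Finset.univ.filter fun n => p m n).card := by
  rw [Finset.card_filter, Fintype.sum_prod_type]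
  simp only [Finset.card_filter]

lemma card_filter_ge {N : ℕ} (a : Fin N) :
    (Finset.univ.filter fun j : Fin N => (a : ℕ) ≤ (j : ℕ)).card = N - a := by
  have h : (Finset.univ.filter fun j : Fin N => (a : ℕ) ≤ (j : ℕ)) = Finset.Ici a := by
    ext j; simp only [Finset.mem_filter, Finset.mem_univ, true_and, Finset.mem_Ici, Fin.le_def]
  rw [h, Fin.card_Ici]

lemma nsc_comb_weight {k N : ℕ} {Fq : Type*} [Field Fq] [DecidableEq Fq]
    {B : Matrix (Fin k) (Fin N) Fq} (hB : NSC B) (hkN : k ≤ N) (r : Fin k) (c : Fin k → Fq)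
    (hc : ∀ i, r < i → c i = 0) (hcr : c r ≠ 0) :
    N - (r : ℕ) ≤ (Finset.univ.filter fun n => ∑ i, c i * B i n ≠ 0).card := by
  by_contra hlt
  push_neg at hlt
  have hle : (r : ℕ) + 1 ≤ k := r.isLt
  have hsplit := Finset.card_filter_add_card_filter_not
    (s := (Finset.univ : Finset (Fin N))) (p := fun n => ∑ i, c i * B i n ≠ 0)
  rw [Finset.card_univ, Fintype.card_fin] at hsplit
  have hrN : (r : ℕ) < N := lt_of_lt_of_le r.isLt hkN
  have hZcard : (r : ℕ) + 1 ≤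
      (Finset.univ.filter fun n : Fin N => ¬ (∑ i, c i * B i n ≠ 0)).card := by omega
  obtain ⟨Z, hZsub, hZcard'⟩ := Finset.exists_subset_card_eq hZcard
  set f := Z.orderEmbOfFin hZcard' with hf
  have hdet := hB ((r : ℕ) + 1) hle f (f.strictMono)
  set Mm : Matrix (Fin ((r:ℕ)+1)) (Fin ((r:ℕ)+1)) Fq :=
    Matrix.of fun i j => B (Fin.castLE hle i) (f j) with hMm
  set c' : Fin ((r:ℕ)+1) → Fq := fun i => c (Fin.castLE hle i) with hc'
  have hsum : ∀ t : Fin N,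
      ∑ i : Fin ((r:ℕ)+1), c (Fin.castLE hle i) * B (Fin.castLE hle i) t
        = ∑ i : Fin k, c i * B i t := by
    intro t
    have key : ∑ i ∈ Finset.univ.map (Fin.castLEEmb hle), c i * B i t
        = ∑ i : Fin k, c i * B i t := by
      refine Finset.sum_subset (Finset.subset_univ _) ?_
      intro i _ hi
      have hri : r < i := by
        by_contra hri
        apply hi
        simp only [Finset.mem_map, Finset.mem_univ, true_and]
        refine ⟨⟨(i : ℕ), by omega⟩, ?_⟩
        simp only [Fin.castLEEmb, Fin.castLE, Fin.ext_iff, Function.Embedding.coeFn_mk,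
          OrderEmbedding.coe_ofStrictMono]
      rw [hc i hri, zero_mul]
    rw [← key, Finset.sum_map]
    simp [Fin.castLEEmb]
  have hvz : Matrix.vecMul c' Mm = 0 := by
    funext j
    have hmem : f j ∈ Z := Z.orderEmbOfFin_mem hZcard' j
    have : ∑ i, c i * B i (f j) = 0 := by
      have := hZsub hmem
      simp only [Finset.mem_filter, not_not] at this
      exact this.2
    simp only [Matrix.vecMul, dotProduct, hc', hMm, Matrix.of_apply, Pi.zero_apply]
    rw [hsum (f j), this]
  have hcz : c' = 0 := by
    have hU : IsUnit Mm.det := Ne.isUnit hdet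
    calc c' = Matrix.vecMul c' (Mm * Mm⁻¹) := by
          rw [Matrix.mul_nonsing_inv _ hU, Matrix.vecMul_one]
      _ = Matrix.vecMul (Matrix.vecMul c' Mm) Mm⁻¹ := by rw [Matrix.vecMul_vecMul]
      _ = 0 := by rw [hvz, Matrix.zero_vecMul]
  apply hcr
  have := congrFun hcz ⟨(r : ℕ), Nat.lt_succ_self _⟩
  simpa [hc', Fin.ext_iff] using this

/-- Blackmore–Norton: if `B` is NSC and triangular then the minimum distance of
`C = [A_1 … A_k]·B` equals `d* = min_i d_{a,i}·(N − (i−1))` (zero-based: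
`d_{a,i}·(N − i)`): every pair of distinct codewords is at distance at least
`d_{a,i}·(N − i)` for some `i`, and some pair of distinct codewords is at
distance at most `d_{a,i}·(N − i)` for every `i`. -/
theorem matrix_product_code_min_dist_eq
    {Fq : Type*} [Field Fq] [Fintype Fq] [DecidableEq Fq]
    {M N k : ℕ} (hk : 0 < k) (hkN : k ≤ N)
    (B : Matrix (Fin k) (Fin N) Fq) (hB : NSC B) (hBtri : Triangular B)
    (A : Fin k → Submodule Fq (Fin M → Fq)) (da : Fin k → ℕ)
    (hA : ∀ i, ∀ v ∈ A i, v ≠ 0 → da i ≤ hammingNorm v)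
    (hA' : ∀ i, ∃ v ∈ A i, v ≠ 0 ∧ hammingNorm v = da i) :
    (∀ w₁ ∈ matrixProductCode A B, ∀ w₂ ∈ matrixProductCode A B, w₁ ≠ w₂ →
      ∃ i : Fin k, da i * (N - (i : ℕ)) ≤
        (Finset.univ.filter fun q : Fin M × Fin N => w₁ q.1 q.2 ≠ w₂ q.1 q.2).card) ∧
    (∃ w₁ ∈ matrixProductCode A B, ∃ w₂ ∈ matrixProductCode A B, w₁ ≠ w₂ ∧
      ∀ i : Fin k,
        (Finset.univ.filter fun q : Fin M × Fin N => w₁ q.1 q.2 ≠ w₂ q.1 q.2).card ≤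
          da i * (N - (i : ℕ))) := by
  constructor
  · -- lower bound
    rintro w₁ ⟨a₁, ha₁, rfl⟩ w₂ ⟨a₂, ha₂, rfl⟩ hne
    set c : Fin k → Fin M → Fq := fun i => a₁ i - a₂ i with hcdef
    have hdiff : ∀ m n, (∑ i, a₁ i m * B i n) - (∑ i, a₂ i m * B i n)
        = ∑ i, c i m * B i n := by
      intro m n
      rw [← Finset.sum_sub_distrib]
      exact Finset.sum_congr rfl fun i _ => by simp [hcdef, sub_mul]
    have hT : (Finset.univ.filter fun i : Fin k => c i ≠ 0).Nonempty := by
      by_contra hTe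
      apply hne
      rw [Finset.not_nonempty_iff_eq_empty, Finset.filter_eq_empty_iff] at hTe
      funext m n
      have : (∑ i, a₁ i m * B i n) - (∑ i, a₂ i m * B i n) = 0 := by
        rw [hdiff]
        refine Finset.sum_eq_zero fun i _ => ?_
        have : c i = 0 := by have := hTe (Finset.mem_univ i); simpa using this
        rw [show c i m = 0 from by rw [this]; rfl, zero_mul]
      exact sub_eq_zero.mp this
    set r := (Finset.univ.filter fun i : Fin k => c i ≠ 0).max' hT with hr
    have hrmem : r ∈ Finset.univ.filter fun i : Fin k => c i ≠ 0 :=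
      (Finset.univ.filter fun i : Fin k => c i ≠ 0).max'_mem hT
    have hcr : c r ≠ 0 := by simpa using hrmem
    have hcabove : ∀ i, r < i → c i = 0 := by
      intro i hi
      by_contra hci
      have : i ≤ r := Finset.le_max' _ i (by simpa using hci)
      exact absurd hi (not_lt.mpr this)
    refine ⟨r, ?_⟩
    beta_reduce
    rw [card_filter_prod (fun m n => (∑ i, a₁ i m * B i n) ≠ ∑ i, a₂ i m * B i n)]
    have hrow : ∀ m : Fin M, c r m ≠ 0 →
        N - (r : ℕ) ≤ (Finset.univ.filter fun n =>
          (∑ i, a₁ i m * B i n) ≠ (∑ i, a₂ i m * B i n)).card := by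
      intro m hm
      have := nsc_comb_weight hB hkN r (fun i => c i m)
        (fun i hi => by show c i m = 0; rw [hcabove i hi]; rfl) hm
      have hset : (Finset.univ.filter fun n =>
          (∑ i, a₁ i m * B i n) ≠ (∑ i, a₂ i m * B i n))
          = Finset.univ.filter fun n => ∑ i, c i m * B i n ≠ 0 := by
        ext n
        simp only [Finset.mem_filter, Finset.mem_univ, true_and, Ne]
        rw [← sub_eq_zero, hdiff m n]
      rw [hset]
      exact this
    have hsupp : da r ≤ (Finset.univ.filter fun m => c r m ≠ 0).card := by
      have := hA r (c r) (Submodule.sub_mem _ (ha₁ r) (ha₂ r)) hcr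
      simpa [hammingNorm] using this
    calc da r * (N - (r : ℕ))
        ≤ (Finset.univ.filter fun m => c r m ≠ 0).card * (N - (r : ℕ)) :=
          Nat.mul_le_mul_right _ hsupp
      _ = ∑ m ∈ Finset.univ.filter fun m => c r m ≠ 0, (N - (r : ℕ)) := by
          rw [Finset.sum_const, smul_eq_mul]
      _ ≤ ∑ m ∈ Finset.univ.filter fun m => c r m ≠ 0,
            (Finset.univ.filter fun n =>
              (∑ i, a₁ i m * B i n) ≠ (∑ i, a₂ i m * B i n)).card := by
          refine Finset.sum_le_sum fun m hm => hrow m ?_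
          simpa using hm
      _ ≤ ∑ m, (Finset.univ.filter fun n =>
              (∑ i, a₁ i m * B i n) ≠ (∑ i, a₂ i m * B i n)).card :=
          Finset.sum_le_sum_of_subset (Finset.subset_univ _)
  · -- upper bound
    obtain ⟨π, hπ⟩ := hBtri
    obtain ⟨i₀, -, hmin⟩ := Finset.exists_min_image Finset.univ
      (fun i : Fin k => da i * (N - (i : ℕ))) ⟨⟨0, hk⟩, Finset.mem_univ _⟩
    obtain ⟨v, hvA, hv0, hvnorm⟩ := hA' i₀
    -- the i₀-th row of B is nonzero
    have hrowB : ∃ n, B i₀ n ≠ 0 := by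
      by_contra hz
      push_neg at hz
      have hle : (i₀ : ℕ) + 1 ≤ k := i₀.isLt
      have hmono : StrictMono (fun i : Fin ((i₀:ℕ)+1) => (⟨(i : ℕ), by
          have := i.isLt; omega⟩ : Fin N)) := by
        intro x y hxy
        exact hxy
      have hdet := hB ((i₀ : ℕ) + 1) hle _ hmono
      apply hdet
      apply Matrix.det_eq_zero_of_row_eq_zero ⟨(i₀ : ℕ), Nat.lt_succ_self _⟩
      intro j
      have : Fin.castLE hle ⟨(i₀ : ℕ), Nat.lt_succ_self _⟩ = i₀ := Fin.ext rfl
      simp only [Matrix.of_apply, this]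
      exact hz _
    obtain ⟨n₀, hn₀⟩ := hrowB
    obtain ⟨m₀, hm₀⟩ : ∃ m, v m ≠ 0 := by
      by_contra hz
      push_neg at hz
      exact hv0 (funext hz)
    set a : (i : Fin k) → Fin M → Fq := fun i => if i = i₀ then v else 0 with hadef
    have hwform : ∀ m n, (∑ i, a i m * B i n) = v m * B i₀ n := by
      intro m n
      rw [Finset.sum_eq_single i₀]
      · simp [hadef]
      · intro i _ hii
        simp [hadef, hii]
      · intro h
        exact absurd (Finset.mem_univ i₀) h
    refine ⟨fun m n => ∑ i, a i m * B i n,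
      ⟨a, fun i => by
        by_cases h : i = i₀
        · subst h
          simpa only [hadef, if_pos rfl] using hvA
        · have hz : a i = 0 := by simp only [hadef, if_neg h]
          rw [hz]; exact Submodule.zero_mem _, rfl⟩,
      0, ⟨fun _ => 0, fun i => Submodule.zero_mem _, by funext m n; simp⟩, ?_, ?_⟩
    · intro hEq
      have := congrFun (congrFun hEq m₀) n₀
      rw [hwform] at this
      exact mul_ne_zero hm₀ hn₀ (by simpa using this)
    · intro i
      beta_reduce
      rw [card_filter_prod
        (fun m n => (∑ i, a i m * B i n) ≠ (0 : Fin M → Fin N → Fq) m n)]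
      have hrowcard : (Finset.univ.filter fun n => B i₀ n ≠ 0).card ≤ N - (i₀ : ℕ) := by
        have hc1 : (Finset.univ.filter fun n : Fin N => ((i₀:ℕ) ≤ ((π n : Fin N) : ℕ))).card
            = N - (i₀ : ℕ) := by
          have hEq : (Finset.univ.filter fun n : Fin N => ((i₀:ℕ) ≤ ((π n : Fin N) : ℕ)))
              = (Finset.univ.filter fun j : Fin N =>
                  (((⟨(i₀:ℕ), lt_of_lt_of_le i₀.isLt hkN⟩ : Fin N) : ℕ) ≤ (j : ℕ))).map
                  π.symm.toEmbedding := by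
            ext n
            simp only [Finset.mem_filter, Finset.mem_univ, true_and, Finset.mem_map,
              Equiv.coe_toEmbedding]
            constructor
            · intro h
              exact ⟨π n, h, π.symm_apply_apply n⟩
            · rintro ⟨j, hj, rfl⟩
              simpa using hj
          rw [hEq, Finset.card_map, card_filter_ge]
        rw [← hc1]
        refine Finset.card_le_card fun n hn => ?_
        simp only [Finset.mem_filter, Finset.mem_univ, true_and] at hn ⊢
        by_contra hlt
        push_neg at hlt
        exact hn (hπ i₀ n hlt)
      have hcell : ∀ m, (Finset.univ.filter fun n =>
          (∑ i, a i m * B i n) ≠ (0 : Fin M → Fin N → Fq) m n).card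
          ≤ if v m ≠ 0 then N - (i₀ : ℕ) else 0 := by
        intro m
        by_cases hvm : v m = 0
        · have hempty : (Finset.univ.filter fun n =>
              (∑ i, a i m * B i n) ≠ (0 : Fin M → Fin N → Fq) m n) = ∅ := by
            rw [Finset.filter_eq_empty_iff]
            intro n _
            rw [hwform, hvm, zero_mul]
            simp
          rw [hempty]
          simp
        · rw [if_pos hvm]
          refine le_trans (Finset.card_le_card fun n hn => ?_) hrowcard
          simp only [Finset.mem_filter, Finset.mem_univ, true_and] at hn ⊢
          rw [hwform] at hn
          intro hB0
          exact hn (by rw [hB0, mul_zero]; simp)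
      calc ∑ m, (Finset.univ.filter fun n =>
            (∑ i, a i m * B i n) ≠ (0 : Fin M → Fin N → Fq) m n).card
          ≤ ∑ m, if v m ≠ 0 then N - (i₀ : ℕ) else 0 :=
            Finset.sum_le_sum fun m _ => hcell m
        _ = (Finset.univ.filter fun m => v m ≠ 0).card * (N - (i₀ : ℕ)) := by
            rw [Finset.sum_ite, Finset.sum_const, Finset.sum_const]
            simp [mul_comm]
        _ = da i₀ * (N - (i₀ : ℕ)) := by
            rw [show (Finset.univ.filter fun m => v m ≠ 0).card = da i₀ from by
              simpa [hammingNorm] using hvnorm]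
        _ ≤ da i * (N - (i : ℕ)) := hmin i (Finset.mem_univ i)
end

section
/- Consider the concatenated code A·B with outer minimum distance d_a and inner minimum distance d_b, decoded by performing minimum-distance decoding of each of the M rows with B, assigning row j reliability weight α_j = (d_b − w_j)/d_b where w_j = 2·wt(Ê_j) if 2·wt(Ê_j) < d_b and w_j = d_b on row-decoding failure, followed by GMD decoding of each column with A. This decoder correctly recovers the transmitted codeword for every error pattern E satisfying Σ_{i ∈ [M]} min{wt(E_i), d_b} < d_a·d_b / 2. -/
/-! Forney's GMD sum is bounded row by row by the row's share `2·min{wt(E_j), d_b}/d_b` of the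
error budget. A correctly decoded row costs `1 - α_j = 2·wt(E_j)/d_b`. A wrongly decoded row has
`wt(E_j) + dist(R_j, Ŵ_j) ≥ d_b` by the triangle inequality, so it costs
`1 + α_j = 2(d_b - dist)/d_b ≤ 2·min{wt(E_j), d_b}/d_b`. A failed row costs `1`, and
`2·wt(E_j) ≥ d_b` since the transmitted row itself is not within `d_b/2` of `R_j`. Summing,
the GMD sum is below `2·Σ_j min{wt(E_j), d_b}/d_b < d_a`. -/

section Weights

variable {d t s : ℕ}

theorem one_le_two_mul_min_div (hd : 0 < d) (h : d ≤ 2 * t) :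
    1 ≤ 2 * (min t d : ℕ) / (d : ℝ) := by
  rw [le_div_iff₀ (by exact_mod_cast hd), one_mul]
  exact_mod_cast (by omega : d ≤ 2 * min t d)

theorem one_sub_div_eq_two_mul_min_div (hd : 0 < d) (h : 2 * t < d) :
    1 - ((d : ℝ) - 2 * t) / d = 2 * (min t d : ℕ) / d := by
  rw [min_eq_left (by omega)]
  field_simp
  ring

theorem one_add_div_le_two_mul_min_div (hd : 0 < d) (h : d ≤ t + s) :
    1 + ((d : ℝ) - 2 * s) / d ≤ 2 * (min t d : ℕ) / d := by
  have hdR : (0 : ℝ) < d := by exact_mod_cast hd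
  rw [add_div' _ _ _ hdR.ne', div_le_div_iff_of_pos_right hdR]
  have hR : (d : ℝ) ≤ t + s := by exact_mod_cast h
  have : (d : ℝ) - s ≤ (min t d : ℕ) := by
    push_cast
    exact le_min (by linarith) (by linarith [s.cast_nonneg (α := ℝ)])
  linarith

end Weights

section Hamming

variable {ι : Type*} [Fintype ι] {β : ι → Type*} [∀ i, AddGroup (β i)] [∀ i, DecidableEq (β i)]

theorem hammingDist_add_self_left (w e : ∀ i, β i) : hammingDist (w + e) w = hammingNorm e := by
  rw [hammingDist_comm, hammingDist_eq_hammingNorm, neg_add_cancel_left]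

def MinDistGE (C : Set (∀ i, β i)) (d : ℕ) : Prop :=
  ∀ u ∈ C, ∀ v ∈ C, u ≠ v → d ≤ hammingDist u v

theorem le_two_mul_hammingNorm_of_not_exists {C : Set (∀ i, β i)} {d : ℕ} {w e : ∀ i, β i}
    (hw : w ∈ C) (h : ¬∃ c ∈ C, 2 * hammingDist (w + e) c < d) : d ≤ 2 * hammingNorm e := by
  by_contra! hlt
  exact h ⟨w, hw, by rwa [hammingDist_add_self_left]⟩

theorem MinDistGE.le_hammingNorm_add_hammingDist {C : Set (∀ i, β i)} {d : ℕ} (hC : MinDistGE C d)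
    {w e c : ∀ i, β i} (hw : w ∈ C) (hc : c ∈ C) (hcw : c ≠ w) :
    d ≤ hammingNorm e + hammingDist (w + e) c :=
  calc d ≤ hammingDist w c := hC w hw c hc hcw.symm
    _ ≤ hammingDist w (w + e) + hammingDist (w + e) c := hammingDist_triangle _ _ _
    _ = hammingNorm e + hammingDist (w + e) c := by
      rw [hammingDist_comm, hammingDist_add_self_left]

/-- Forney's weight `α = (d - w)/d` with `w = 2·dist`, and `w = d` on a decoding failure. -/
noncomputable def reliability (failed : Prop) [Decidable failed] (d dist : ℕ) : ℝ :=
  if failed then 0 else ((d : ℝ) - 2 * dist) / d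

theorem gmd_row_cost_le {C : Set (∀ i, β i)} {d : ℕ} (hd : 0 < d) (hC : MinDistGE C d)
    {w e c : ∀ i, β i} (hw : w ∈ C) (failed : Prop) [Decidable failed]
    (hsucc : ¬failed → c ∈ C ∧ 2 * hammingDist (w + e) c < d)
    (hfail : failed → ¬∃ c ∈ C, 2 * hammingDist (w + e) c < d) :
    (if c = w then 1 - reliability failed d (hammingDist (w + e) c)
      else 1 + reliability failed d (hammingDist (w + e) c))
      ≤ 2 * (min (hammingNorm e) d : ℕ) / (d : ℝ) := by
  by_cases hf : failed
  · have hle := one_le_two_mul_min_div hd (le_two_mul_hammingNorm_of_not_exists hw (hfail hf))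
    split_ifs <;> simpa [reliability, hf] using hle
  · obtain ⟨hc, hdist⟩ := hsucc hf
    simp only [reliability, if_neg hf]
    split_ifs with hcw
    · subst hcw
      rw [hammingDist_add_self_left] at hdist ⊢
      exact (one_sub_div_eq_two_mul_min_div hd hdist).le
    · exact one_add_div_le_two_mul_min_div hd (hC.le_hammingNorm_add_hammingDist hw hc hcw)

end Hamming

theorem concatenated_decoder_corrects_general
    {Fq : Type*} [Field Fq] [DecidableEq Fq]
    {M N da db : ℕ}
    (Bcode : Set (Fin N → Fq))
    (hB : ∀ u ∈ Bcode, ∀ v ∈ Bcode, u ≠ v → db ≤ hammingDist u v)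
    (W E : Fin M → Fin N → Fq) (hW : ∀ j, W j ∈ Bcode)
    (What : Fin M → Fin N → Fq) (fail : Finset (Fin M))
    (hdec1 : ∀ j ∉ fail,
      What j ∈ Bcode ∧ 2 * hammingDist (W j + E j) (What j) < db)
    (hdec2 : ∀ j ∈ fail, ¬ ∃ c ∈ Bcode, 2 * hammingDist (W j + E j) c < db)
    (hE : 2 * ∑ j, min (hammingNorm (E j)) db < da * db) :
    (∑ j ∈ Finset.univ.filter fun j => What j = W j,
      (1 - (if j ∈ fail then 0 else
        ((db : ℝ) - 2 * (hammingDist (W j + E j) (What j) : ℝ)) / (db : ℝ)))) +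
    (∑ j ∈ Finset.univ.filter fun j => What j ≠ W j,
      (1 + (if j ∈ fail then 0 else
        ((db : ℝ) - 2 * (hammingDist (W j + E j) (What j) : ℝ)) / (db : ℝ))))
    < (da : ℝ) := by
  have hdb : 0 < db := Nat.pos_of_ne_zero (by rintro rfl; simp at hE)
  rw [← Finset.sum_ite]
  calc _ ≤ ∑ j, 2 * (min (hammingNorm (E j)) db : ℕ) / (db : ℝ) :=
        Finset.sum_le_sum fun j _ => gmd_row_cost_le hdb hB (hW j) (j ∈ fail) (hdec1 j) (hdec2 j)
    _ < da := by
        rw [← Finset.sum_div, div_lt_iff₀ (by exact_mod_cast hdb), ← Finset.mul_sum]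
        exact_mod_cast hE

/-- Correctness of the decoder for concatenated codes `A·B`:  each row of the
received word `R = W + E` is decoded with a minimum-distance decoder for the
inner code (`What j` is the output on row `j`; `fail` is the set of rows on
which the row decoder fails, i.e. where no codeword of `B` lies within half the
minimum distance `d_b`).  Row `j` is assigned the reliability weight
`α_j = (d_b − w_j)/d_b`, with `w_j = 2·wt(Ê_j)` on success and `w_j = d_b` on
failure.  If `Σ_j min{wt(E_j), d_b} < d_a·d_b/2`, then Forney's GMD condition
`Σ_{j ∈ I_C}(1 − α_j) + Σ_{j ∈ I_E}(1 + α_j) < d_a` holds (with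
`I_E` the set of incorrectly decoded rows), so the GMD decoder for the outer
code recovers every column of the transmitted codeword. -/
theorem concatenated_decoder_corrects
    {Fq : Type*} [Field Fq] [Fintype Fq] [DecidableEq Fq]
    {M N da db : ℕ} (hdb : 0 < db)
    (Bcode : Set (Fin N → Fq))
    (hB : ∀ u ∈ Bcode, ∀ v ∈ Bcode, u ≠ v → db ≤ hammingDist u v)
    (W E : Fin M → Fin N → Fq) (hW : ∀ j, W j ∈ Bcode)
    (What : Fin M → Fin N → Fq) (fail : Finset (Fin M))
    (hdec1 : ∀ j ∉ fail,
      What j ∈ Bcode ∧ 2 * hammingDist (W j + E j) (What j) < db)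
    (hdec2 : ∀ j ∈ fail, ¬ ∃ c ∈ Bcode, 2 * hammingDist (W j + E j) c < db)
    (hE : 2 * ∑ j, min (hammingNorm (E j)) db < da * db) :
    (∑ j ∈ Finset.univ.filter fun j => What j = W j,
      (1 - (if j ∈ fail then 0 else
        ((db : ℝ) - 2 * (hammingDist (W j + E j) (What j) : ℝ)) / (db : ℝ)))) +
    (∑ j ∈ Finset.univ.filter fun j => What j ≠ W j,
      (1 + (if j ∈ fail then 0 else
        ((db : ℝ) - 2 * (hammingDist (W j + E j) (What j) : ℝ)) / (db : ℝ))))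
    < (da : ℝ) :=
  concatenated_decoder_corrects_general Bcode hB W E hW What fail hdec1 hdec2 hE
end
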